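/- Trace gap under the sample-size gap condition: suppose for two candidate domains m and m_s the sample covariances Σ^{[m]}, Σ^{[m_s]}, Σ^{[0]} all have eigenvalues in [τ₁, τ₂], and τ₁²(n₀/N_m) - τ₂²(n₀/N_{m_s}) ≥ c₃ > 0 after dividing through appropriately. Then tr(G^{[m]⁻¹}G^{[0]}) - tr(G^{[m_s]⁻¹}G^{[0]}) ≥ (p/τ₂)·(τ₁²(n₀/N_m) - τ₂²(n₀/N_{m_s}))·(1/τ₁) > 0, i.e., the trace penalty is strictly larger for the domain with smaller sample size N_m < (τ₁²/τ₂²)N_{m_s}. -/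

import Mathlib

/-!
Pairing a positive semidefinite matrix `P` with a Loewner inequality `B ≤ C` gives
`tr (P B) ≤ tr (P C)`, because `tr (P Q) = tr (√P Q √P) ≥ 0` for `Q ⪰ 0`. With `P = A⁻¹`
this turns `τ₁ ≤ A, S ≤ τ₂` into `p τ₁ / τ₂ ≤ tr (A⁻¹ S) ≤ p τ₂ / τ₁` (pair once against `S`,
once against `A` itself, where `tr (A⁻¹ A) = p`). The sample sizes only rescale these traces by
`n₀ / N`, so the gap condition separates the two penalties.
-/

open Matrix

namespace Matrix

open scoped ComplexOrder MatrixOrder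

variable {n : Type*} [Fintype n] [DecidableEq n]

theorem smul_inv₀ {K : Type*} [Field K] (c : K) (A : Matrix n n K) : (c • A)⁻¹ = c⁻¹ • A⁻¹ := by
  rcases eq_or_ne c 0 with rfl | hc
  · simp
  by_cases hA : IsUnit A.det
  · exact inv_smul' (A := A) (Units.mk0 c hc) hA
  · have hcA : ¬ IsUnit (c • A).det := by
      simpa [det_smul, hc] using hA
    simp [nonsing_inv_apply_not_isUnit _ hA, nonsing_inv_apply_not_isUnit _ hcA]

variable {𝕜 : Type*} [RCLike 𝕜]

theorem PosSemidef.trace_mul_nonneg {A B : Matrix n n 𝕜} (hA : A.PosSemidef)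
    (hB : B.PosSemidef) : 0 ≤ (A * B).trace := by
  set R := CFC.sqrt A
  have hR : Rᴴ = R := (CFC.sqrt_nonneg A).posSemidef.isHermitian
  have hRR : R * R = A := CFC.sqrt_mul_sqrt_self A hA.nonneg
  calc (0 : 𝕜) ≤ (Rᴴ * B * R).trace := (hB.conjTranspose_mul_mul_same R).trace_nonneg
    _ = (A * B).trace := by rw [hR, ← hRR, trace_mul_cycle]

theorem PosSemidef.trace_mul_le_trace_mul {A B C : Matrix n n 𝕜} (hA : A.PosSemidef)
    (hBC : B ≤ C) : (A * B).trace ≤ (A * C).trace := by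
  simpa [Matrix.mul_sub, sub_nonneg] using hA.trace_mul_nonneg (le_iff.mp hBC)

theorem PosDef.card_le_mul_trace_inv {A : Matrix n n ℝ} (hA : A.PosDef) {c : ℝ}
    (hAc : A ≤ c • 1) : (Fintype.card n : ℝ) ≤ c * A⁻¹.trace := by
  simpa [nonsing_inv_mul A ((isUnit_iff_isUnit_det A).mp hA.isUnit), trace_smul] using
    hA.inv.posSemidef.trace_mul_le_trace_mul hAc

theorem PosDef.mul_trace_inv_le_card {A : Matrix n n ℝ} (hA : A.PosDef) {c : ℝ}
    (hcA : c • 1 ≤ A) : c * A⁻¹.trace ≤ Fintype.card n := by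
  simpa [nonsing_inv_mul A ((isUnit_iff_isUnit_det A).mp hA.isUnit), trace_smul] using
    hA.inv.posSemidef.trace_mul_le_trace_mul hcA

theorem PosDef.card_mul_div_le_trace_inv_mul {A S : Matrix n n ℝ} (hA : A.PosDef) {τ₁ τ₂ : ℝ}
    (hτ₁ : 0 ≤ τ₁) (hτ₂ : 0 < τ₂) (hA₂ : A ≤ τ₂ • 1) (hS₁ : τ₁ • 1 ≤ S) :
    Fintype.card n * τ₁ / τ₂ ≤ (A⁻¹ * S).trace := by
  have hS : τ₁ * A⁻¹.trace ≤ (A⁻¹ * S).trace := by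
    simpa [trace_smul] using hA.inv.posSemidef.trace_mul_le_trace_mul hS₁
  have hinv : Fintype.card n / τ₂ ≤ A⁻¹.trace := by
    rw [div_le_iff₀' hτ₂]; exact hA.card_le_mul_trace_inv hA₂
  calc Fintype.card n * τ₁ / τ₂ = τ₁ * (Fintype.card n / τ₂) := by ring
    _ ≤ τ₁ * A⁻¹.trace := by gcongr
    _ ≤ (A⁻¹ * S).trace := hS

theorem PosDef.trace_inv_mul_le_card_mul_div {A S : Matrix n n ℝ} (hA : A.PosDef) {τ₁ τ₂ : ℝ}
    (hτ₁ : 0 < τ₁) (hτ₂ : 0 ≤ τ₂) (hA₁ : τ₁ • 1 ≤ A) (hS₂ : S ≤ τ₂ • 1) :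
    (A⁻¹ * S).trace ≤ Fintype.card n * τ₂ / τ₁ := by
  have hS : (A⁻¹ * S).trace ≤ τ₂ * A⁻¹.trace := by
    simpa [trace_smul] using hA.inv.posSemidef.trace_mul_le_trace_mul hS₂
  have hinv : A⁻¹.trace ≤ Fintype.card n / τ₁ := by
    rw [le_div_iff₀' hτ₁]; exact hA.mul_trace_inv_le_card hA₁
  calc (A⁻¹ * S).trace ≤ τ₂ * A⁻¹.trace := hS
    _ ≤ τ₂ * (Fintype.card n / τ₁) := by gcongr
    _ = Fintype.card n * τ₂ / τ₁ := by ring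

theorem trace_smul_inv_mul_smul {K : Type*} [Field K] (N c : K) (A S : Matrix n n K) :
    ((N • A)⁻¹ * (c • S)).trace = c / N * (A⁻¹ * S).trace := by
  rw [smul_inv₀, smul_mul_smul_comm, trace_smul, smul_eq_mul, div_eq_inv_mul]

end Matrix

theorem trace_gap_sample_size_general
    (p : ℕ) (hp : 0 < p)
    (Sm Sms S0 : Matrix (Fin p) (Fin p) ℝ)
    (τ₁ τ₂ Nm Nms n₀ c₃ : ℝ)
    (hτ : 0 < τ₁) (hττ : τ₁ ≤ τ₂) (hNm : 0 < Nm) (hNms : 0 < Nms) (hn₀ : 0 < n₀)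
    (hSm : Sm.PosDef) (hSms : Sms.PosDef)
    (hSm2 : (τ₂ • (1 : Matrix (Fin p) (Fin p) ℝ) - Sm).PosSemidef)
    (hSms1 : (Sms - τ₁ • (1 : Matrix (Fin p) (Fin p) ℝ)).PosSemidef)
    (hS01 : (S0 - τ₁ • (1 : Matrix (Fin p) (Fin p) ℝ)).PosSemidef)
    (hS02 : (τ₂ • (1 : Matrix (Fin p) (Fin p) ℝ) - S0).PosSemidef)
    (hgap : τ₁ ^ 2 * (n₀ / Nm) - τ₂ ^ 2 * (n₀ / Nms) ≥ c₃)
    (hc₃ : 0 < c₃) :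
    (((Nm • Sm)⁻¹) * (n₀ • S0)).trace - (((Nms • Sms)⁻¹) * (n₀ • S0)).trace
        ≥ ((p : ℝ) / τ₂) * (τ₁ ^ 2 * (n₀ / Nm) - τ₂ ^ 2 * (n₀ / Nms)) * (1 / τ₁) ∧
      0 < ((p : ℝ) / τ₂) * (τ₁ ^ 2 * (n₀ / Nm) - τ₂ ^ 2 * (n₀ / Nms)) * (1 / τ₁) := by
  have hτ₂ : 0 < τ₂ := hτ.trans_le hττ
  have hlower := hSm.card_mul_div_le_trace_inv_mul hτ.le hτ₂ hSm2 hS01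
  have hupper := hSms.trace_inv_mul_le_card_mul_div hτ hτ₂.le hSms1 hS02
  rw [Fintype.card_fin] at hlower hupper
  rw [trace_smul_inv_mul_smul, trace_smul_inv_mul_smul]
  have hp' : (0 : ℝ) < p := Nat.cast_pos.mpr hp
  refine ⟨?_, by have := hc₃.trans_le hgap; positivity⟩
  calc (p / τ₂) * (τ₁ ^ 2 * (n₀ / Nm) - τ₂ ^ 2 * (n₀ / Nms)) * (1 / τ₁)
      = n₀ / Nm * (p * τ₁ / τ₂) - n₀ / Nms * (p * τ₂ / τ₁) := by field_simp
    _ ≤ n₀ / Nm * (Sm⁻¹ * S0).trace - n₀ / Nms * (Sms⁻¹ * S0).trace := by gcongr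

/-- Trace gap under the sample-size gap condition. -/
theorem trace_gap_sample_size
    (p : ℕ) (hp : 0 < p)
    (Sm Sms S0 : Matrix (Fin p) (Fin p) ℝ)
    (τ₁ τ₂ Nm Nms n₀ c₃ : ℝ)
    (hτ : 0 < τ₁) (hττ : τ₁ ≤ τ₂) (hNm : 0 < Nm) (hNms : 0 < Nms) (hn₀ : 0 < n₀)
    (hSm : Sm.PosDef) (hSms : Sms.PosDef) (hS0 : S0.PosDef)
    (hSm1 : (Sm - τ₁ • (1 : Matrix (Fin p) (Fin p) ℝ)).PosSemidef)
    (hSm2 : (τ₂ • (1 : Matrix (Fin p) (Fin p) ℝ) - Sm).PosSemidef)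
    (hSms1 : (Sms - τ₁ • (1 : Matrix (Fin p) (Fin p) ℝ)).PosSemidef)
    (hSms2 : (τ₂ • (1 : Matrix (Fin p) (Fin p) ℝ) - Sms).PosSemidef)
    (hS01 : (S0 - τ₁ • (1 : Matrix (Fin p) (Fin p) ℝ)).PosSemidef)
    (hS02 : (τ₂ • (1 : Matrix (Fin p) (Fin p) ℝ) - S0).PosSemidef)
    (hgap : τ₁ ^ 2 * (n₀ / Nm) - τ₂ ^ 2 * (n₀ / Nms) ≥ c₃)
    (hc₃ : 0 < c₃) :
    (((Nm • Sm)⁻¹) * (n₀ • S0)).trace - (((Nms • Sms)⁻¹) * (n₀ • S0)).trace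
        ≥ ((p : ℝ) / τ₂) * (τ₁ ^ 2 * (n₀ / Nm) - τ₂ ^ 2 * (n₀ / Nms)) * (1 / τ₁) ∧
      0 < ((p : ℝ) / τ₂) * (τ₁ ^ 2 * (n₀ / Nm) - τ₂ ^ 2 * (n₀ / Nms)) * (1 / τ₁) :=
  trace_gap_sample_size_general p hp Sm Sms S0 τ₁ τ₂ Nm Nms n₀ c₃ hτ hττ hNm hNms hn₀ hSm hSms hSm2
    hSms1 hS01 hS02 hgap hc₃
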